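/- Let X be a connected open subset of ℂ, K ⊂ X compact, and suppose h is holomorphic on X ∖ K and vanishes outside some compact subset of X. If X ∖ K has no relatively compact connected components (relative to X), then h ≡ 0 on X ∖ K. -/
import Mathlib


theorem stmt_10 (X : Set ℂ) (hXo : IsOpen X) (hXc : IsConnected X)
    (K : Set ℂ) (hK : IsCompact K) (hKX : K ⊆ X)
    (h : ℂ → ℂ) (hhol : DifferentiableOn ℂ h (X \ K))
    (L : Set ℂ) (hL : IsCompact L) (hLX : L ⊆ X)
    (hvan : ∀ z ∈ X \ K, z ∉ L → h z = 0)
    -- no connected component of X ∖ K is relatively compact in X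
    (hnocpt : ∀ z ∈ X \ K,
      ¬ (closure (connectedComponentIn (X \ K) z) ⊆ X ∧
         IsCompact (closure (connectedComponentIn (X \ K) z)))) :
    ∀ z ∈ X \ K, h z = 0 := by
  intro z hz
  have hUo : IsOpen (X \ K) := hXo.sdiff hK.isClosed
  set C := connectedComponentIn (X \ K) z with hC
  have hCo : IsOpen C := hUo.connectedComponentIn
  have hCsub : C ⊆ X \ K := connectedComponentIn_subset _ _
  have hzC : z ∈ C := mem_connectedComponentIn hz
  -- C is not contained in L
  have hnotL : ¬ C ⊆ L := by
    intro hCL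
    have hclL : closure C ⊆ L := hL.isClosed.closure_subset_iff.2 hCL
    exact hnocpt z hz ⟨hclL.trans hLX, hL.of_isClosed_subset isClosed_closure hclL⟩
  obtain ⟨w, hwC, hwL⟩ := Set.not_subset.1 hnotL
  -- h is analytic on X \ K
  have hA : AnalyticOnNhd ℂ h (X \ K) := hhol.analyticOnNhd hUo
  have hA' : AnalyticOnNhd ℂ h C := hA.mono hCsub
  have hpc : IsPreconnected C := isPreconnected_connectedComponentIn
  have hev : h =ᶠ[nhds w] 0 := by
    have hopen : IsOpen (C \ L) := hCo.sdiff hL.isClosed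
    filter_upwards [hopen.mem_nhds ⟨hwC, hwL⟩] with x hx
    exact hvan x (hCsub hx.1) hx.2
  exact hA'.eqOn_zero_of_preconnected_of_eventuallyEq_zero hpc hwC hev hzC
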